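/- arXiv:2109.06344 — 4 statements merged into one kernel-verified Lean document; each statement's English description precedes it below -/
import Mathlib

section
/- Let K ≥ 2 and M ≥ 1 be integers, r : ℤ → ℂ, and for each m ∈ ℤ let R_m be the K×K Toeplitz matrix with (q,p) entry r(q − p + m) (1-based indices); assume R_0 is invertible. Let (X_n)_{n∈ℤ} be deterministic M×K complex matrices satisfying the exact correlation hypothesis X_n^H X_{n−j} = M·R_{−j} for all n ∈ ℤ and all 0 ≤ j ≤ K−1 (in particular X_n^H X_n = M·R_0 is invertible). Let (μ_n)_{n∈ℤ} be real step sizes. On a probability space let (v_n)_{n∈ℤ} be square-integrable complex random variables with E[v_n] = 0, E[|v_n|²] = σ_v², and E[v_m \overline{v_n}] = 0 for m ≠ n. Fix i ∈ ℤ, let w̃_{i−K} ∈ ℂ^M be deterministic, and for i−K ≤ n < i define w̃_{n+1} = w̃_n − μ_n X_n (X_n^H X_n)^{-1}(X_n^H w̃_n + 𝐯_n), where 𝐯_n := (v_n, v_{n−1}, …, v_{n−K+1})^T ∈ ℂ^K. Set e_{a,i} := X_i^H w̃_i. Then the K×K matrix E[e_{a,i} 𝐯_i^H] is upper triangular, its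 (1,1) entry is 0, and for 2 ≤ q ≤ K its (q,q) entry equals −σ_v²·(μ_{i−1} + Σ_{j=2}^{q−1} μ_{i−j} Π_{k=1}^{j−1}(1 − μ_{i−k})). Moreover, if r(k) = 0 for all k ≠ 0 (white input), then E[e_{a,i} 𝐯_i^H] is a diagonal matrix. -/
open Matrix MeasureTheory

section Aux

lemma apa_rowShift {K : ℕ} (r : ℤ → ℂ) (R : ℤ → Matrix (Fin K) (Fin K) ℂ)
    (hR : ∀ m : ℤ, ∀ q p : Fin K, R m q p = r ((q : ℤ) - (p : ℤ) + m)) (hR0 : IsUnit (R 0))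
    (j : ℕ) (x : Fin K → ℂ) (q : Fin K) (hq : j ≤ (q:ℕ)) :
    ((R (-(j:ℤ)) * (R 0)⁻¹).mulVec x) q = x ⟨(q:ℕ) - j, by omega⟩ := by
  have hdet : IsUnit (R 0).det := (Matrix.isUnit_iff_isUnit_det _).mp hR0
  have h1 : R 0 * (R 0)⁻¹ = 1 := Matrix.mul_nonsing_inv _ hdet
  set q' : Fin K := ⟨(q:ℕ) - j, by omega⟩ with hq'
  have hv : ((q' : ℕ) : ℤ) = (q : ℤ) - j := by
    simp only [hq']; omega
  have hrow : ∀ p : Fin K, R (-(j:ℤ)) q p = R 0 q' p := by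
    intro p; rw [hR, hR]; congr 1; rw [hv]; ring
  rw [← Matrix.mulVec_mulVec]
  have h2 : (R (-(j:ℤ))).mulVec ((R 0)⁻¹.mulVec x) q
      = (R 0).mulVec ((R 0)⁻¹.mulVec x) q' := by
    simp only [Matrix.mulVec, dotProduct]
    exact Finset.sum_congr rfl (fun p _ => by rw [hrow])
  rw [h2, Matrix.mulVec_mulVec, h1, Matrix.one_mulVec]

lemma apa_rowZeroWhite {K : ℕ} (r : ℤ → ℂ) (R : ℤ → Matrix (Fin K) (Fin K) ℂ)
    (hR : ∀ m : ℤ, ∀ q p : Fin K, R m q p = r ((q : ℤ) - (p : ℤ) + m))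
    (hw : ∀ k : ℤ, k ≠ 0 → r k = 0)
    (j : ℕ) (x : Fin K → ℂ) (q : Fin K) (hq : (q:ℕ) < j) :
    ((R (-(j:ℤ)) * (R 0)⁻¹).mulVec x) q = 0 := by
  rw [← Matrix.mulVec_mulVec]
  simp only [Matrix.mulVec, dotProduct]
  refine Finset.sum_eq_zero (fun p _ => ?_)
  rw [hR, hw _ (by omega), zero_mul]

lemma apa_invSmulMat {K M : ℕ} (hM : 1 ≤ M) (A : Matrix (Fin K) (Fin K) ℂ) (hA : IsUnit A) :
    ((M:ℂ) • A)⁻¹ = (M:ℂ)⁻¹ • A⁻¹ := by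
  have hdet : IsUnit A.det := (Matrix.isUnit_iff_isUnit_det _).mp hA
  have hM0 : (M:ℂ) ≠ 0 := Nat.cast_ne_zero.mpr (by omega)
  refine Matrix.inv_eq_left_inv ?_
  rw [Matrix.smul_mul, Matrix.mul_smul, smul_smul, inv_mul_cancel₀ hM0, one_smul,
    Matrix.nonsing_inv_mul _ hdet]

lemma apa_teleProd (f : ℕ → ℂ) : ∀ q : ℕ, 1 ≤ q →
    (∏ k ∈ Finset.Icc 1 q, (1 - f k)) - 1
      = -(f 1 + ∑ j ∈ Finset.Icc 2 q, f j * ∏ k ∈ Finset.Icc 1 (j-1), (1 - f k)) := by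
  intro q
  induction q with
  | zero => omega
  | succ q ih =>
    intro _
    rcases Nat.eq_zero_or_pos q with h0 | h1
    · subst h0; simp
    · rw [Finset.prod_Icc_succ_top (by omega), Finset.sum_Icc_succ_top (by omega)]
      have hq1 : q + 1 - 1 = q := by omega
      rw [hq1]
      linear_combination ih h1

lemma apa_prodReindex (μ : ℤ → ℝ) (i : ℤ) (q : ℕ) :
    (∏ k ∈ Finset.Ico (i - q) i, (1 - (μ k : ℂ)))
      = ∏ k ∈ Finset.Icc 1 q, (1 - (μ (i - k) : ℂ)) := by
  refine Finset.prod_bij' (fun k _ => (i - k).toNat) (fun j _ => i - j) ?_ ?_ ?_ ?_ ?_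
  · intro a ha; simp only [Finset.mem_Ico] at ha; simp only [Finset.mem_Icc]; omega
  · intro b hb; simp only [Finset.mem_Icc] at hb; simp only [Finset.mem_Ico]; omega
  · intro a ha; beta_reduce; simp only [Finset.mem_Ico] at ha; omega
  · intro b hb; beta_reduce; simp only [Finset.mem_Icc] at hb; omega
  · intro a ha; beta_reduce; simp only [Finset.mem_Ico] at ha
    congr 2
    congr 1
    omega

lemma apa_memlp_conj {Ω : Type*} [MeasurableSpace Ω] {ℙ : Measure Ω} {f : Ω → ℂ}
    (hf : MemLp f 2 ℙ) :
    MemLp (fun ω => (starRingEnd ℂ) (f ω)) 2 ℙ := by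
  refine ⟨RCLike.continuous_conj.comp_aestronglyMeasurable hf.1, ?_⟩
  calc eLpNorm (fun ω => (starRingEnd ℂ) (f ω)) 2 ℙ = eLpNorm f 2 ℙ := eLpNorm_conj f 2 ℙ
    _ < ⊤ := hf.2

lemma apa_intMul {Ω : Type*} [MeasurableSpace Ω] {ℙ : Measure Ω} {f g : Ω → ℂ}
    (hf : MemLp f 2 ℙ) (hg : MemLp g 2 ℙ) : Integrable (fun ω => f ω * g ω) ℙ := by
  have h : MemLp (f • g) 1 ℙ := hg.smul hf (hpqr := ⟨by simp [ENNReal.inv_two_add_inv_two]⟩)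
  exact memLp_one_iff_integrable.mp h

lemma apa_covExpand {Ω : Type*} [MeasurableSpace Ω] (ℙ : Measure Ω) [IsProbabilityMeasure ℙ]
    (σv2 : ℝ) (v : ℤ → Ω → ℂ) (hL2 : ∀ n, MemLp (v n) 2 ℙ)
    (hmean : ∀ n, ∫ ω, v n ω ∂ℙ = 0)
    (hvar : ∀ n, ∫ ω, v n ω * (starRingEnd ℂ) (v n ω) ∂ℙ = (σv2 : ℂ))
    (horth : ∀ m n : ℤ, m ≠ n → ∫ ω, v m ω * (starRingEnd ℂ) (v n ω) ∂ℙ = 0)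
    (D : ℂ) (C : ℤ → ℂ) (s : Finset ℤ) (t : ℤ) :
    ∫ ω, (D + ∑ m ∈ s, v m ω * C m) * (starRingEnd ℂ) (v t ω) ∂ℙ
      = (σv2 : ℂ) * (if t ∈ s then C t else 0) := by
  have hconj := apa_memlp_conj (hL2 t)
  have hmul : ∀ m : ℤ, Integrable (fun ω => v m ω * (starRingEnd ℂ) (v t ω)) ℙ :=
    fun m => apa_intMul (hL2 m) hconj
  have hint1 : Integrable (fun ω => D * (starRingEnd ℂ) (v t ω)) ℙ :=
    (hconj.integrable (by norm_num)).const_mul D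
  have hfun : ∀ ω, (D + ∑ m ∈ s, v m ω * C m) * (starRingEnd ℂ) (v t ω)
      = D * (starRingEnd ℂ) (v t ω) + ∑ m ∈ s, C m * (v m ω * (starRingEnd ℂ) (v t ω)) := by
    intro ω; rw [add_mul, Finset.sum_mul]
    congr 1
    exact Finset.sum_congr rfl (fun m _ => by ring)
  simp only [hfun]
  rw [integral_add hint1 (integrable_finset_sum s (fun m _ => (hmul m).const_mul (C m))),
    integral_finset_sum s (fun m _ => (hmul m).const_mul (C m))]
  simp only [integral_const_mul]
  rw [integral_conj, hmean t, map_zero, mul_zero, zero_add]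
  have hcongr : ∀ m ∈ s, C m * ∫ ω, v m ω * (starRingEnd ℂ) (v t ω) ∂ℙ
      = if m = t then C m * (σv2 : ℂ) else 0 := by
    intro m _
    by_cases hmt : m = t
    · subst hmt; rw [hvar m, if_pos rfl]
    · rw [horth m t hmt, if_neg hmt, mul_zero]
  rw [Finset.sum_congr rfl hcongr, Finset.sum_ite_eq' s t (fun m => C m * (σv2:ℂ))]
  split_ifs <;> ring

end Aux

/-- Theorem 1 of the paper (main theorem). Under the exact large-filter
correlation hypothesis `X_nᴴ X_{n−j} = M R_{−j}` (`0 ≤ j ≤ K−1`), with `R_m`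
the `K × K` Toeplitz matrices of an autocorrelation function `r` (`(q,p)`
entry `r (q − p + m)`, `R_0` invertible), zero-mean square-integrable white
noise `(v_n)` of variance `σ_v²`, step sizes `(μ_n)`, deterministic initial
misalignment `w̃_{i−K}`, and the APA recursion
`w̃_{n+1} = w̃_n − μ_n X_n (X_nᴴ X_n)⁻¹ (X_nᴴ w̃_n + 𝐯_n)` for `i−K ≤ n < i`
with `𝐯_n = (v_n, …, v_{n−K+1})ᵀ`, the matrix `E[e_{a,i} 𝐯_iᴴ]` (with
`e_{a,i} = X_iᴴ w̃_i`) is upper triangular, its `(1,1)` entry vanishes, for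
1-based `2 ≤ q ≤ K` its `(q,q)` entry equals
`−σ_v² (μ_{i−1} + Σ_{j=2}^{q−1} μ_{i−j} Π_{k=1}^{j−1} (1 − μ_{i−k}))`
(here stated with 0-based `Fin K` index `q`, whose 1-based value is `q+1`),
and it is diagonal when `r k = 0` for all `k ≠ 0` (white input). -/
theorem apa_noise_apriori_correlation
    (K M : ℕ) (hK : 2 ≤ K) (hM : 1 ≤ M)
    (r : ℤ → ℂ) (R : ℤ → Matrix (Fin K) (Fin K) ℂ)
    (hR : ∀ m : ℤ, ∀ q p : Fin K, R m q p = r ((q : ℤ) - (p : ℤ) + m))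
    (hR0 : IsUnit (R 0))
    (X : ℤ → Matrix (Fin M) (Fin K) ℂ)
    (hX : ∀ n : ℤ, ∀ j : ℕ, j ≤ K - 1 → (X n)ᴴ * X (n - j) = (M : ℂ) • R (-(j : ℤ)))
    (μ : ℤ → ℝ)
    {Ω : Type*} [MeasurableSpace Ω] (ℙ : Measure Ω) [IsProbabilityMeasure ℙ]
    (σv2 : ℝ) (hσ : 0 ≤ σv2)
    (v : ℤ → Ω → ℂ) (hL2 : ∀ n, MemLp (v n) 2 ℙ)
    (hmean : ∀ n, ∫ ω, v n ω ∂ℙ = 0)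
    (hvar : ∀ n, ∫ ω, v n ω * (starRingEnd ℂ) (v n ω) ∂ℙ = (σv2 : ℂ))
    (horth : ∀ m n : ℤ, m ≠ n → ∫ ω, v m ω * (starRingEnd ℂ) (v n ω) ∂ℙ = 0)
    (i : ℤ) (wt : ℤ → Ω → Fin M → ℂ)
    (hdet : ∃ w0 : Fin M → ℂ, ∀ ω, wt (i - K) ω = w0)
    (hrec : ∀ n : ℤ, i - K ≤ n → n < i → ∀ ω,
      wt (n + 1) ω = wt n ω -
        (μ n : ℂ) • (X n * ((X n)ᴴ * X n)⁻¹).mulVec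
          ((X n)ᴴ.mulVec (wt n ω) + fun k : Fin K => v (n - (k : ℕ)) ω)) :
    (letI Eav : Matrix (Fin K) (Fin K) ℂ := fun q p =>
        ∫ ω, ((X i)ᴴ.mulVec (wt i ω)) q * (starRingEnd ℂ) (v (i - (p : ℕ)) ω) ∂ℙ
     -- upper triangular: entries strictly below the diagonal vanish
     (∀ q p : Fin K, (p : ℕ) < (q : ℕ) → Eav q p = 0) ∧
     -- the (1,1) entry vanishes
     Eav ⟨0, by omega⟩ ⟨0, by omega⟩ = 0 ∧
     -- the diagonal entries, for 1-based index q+1 with 2 ≤ q+1 ≤ K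
     (∀ q : Fin K, 1 ≤ (q : ℕ) →
        Eav q q = -(σv2 : ℂ) *
          ((μ (i - 1) : ℂ) +
            ∑ j ∈ Finset.Icc 2 (q : ℕ),
              (μ (i - (j : ℕ)) : ℂ) *
                ∏ k ∈ Finset.Icc 1 (j - 1), (1 - (μ (i - (k : ℕ)) : ℂ)))) ∧
     -- for a white input the matrix is diagonal
     ((∀ k : ℤ, k ≠ 0 → r k = 0) → ∀ q p : Fin K, q ≠ p → Eav q p = 0)) := by
  obtain ⟨w0, hw0⟩ := hdet
  -- the key induction: affine representation of `wt n` in the noise, together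
  -- with the structure of the coefficient vectors seen through `(X a)ᴴ`
  have key : ∀ t : ℕ, t ≤ K → ∀ n : ℤ, n = i - K + t →
      ∃ d : Fin M → ℂ, ∃ c : ℤ → Fin M → ℂ,
        (∀ m : ℤ, m < i - 2*K ∨ n ≤ m → c m = 0) ∧
        (∀ ω, wt n ω = d + ∑ m ∈ Finset.Ico (i - 2*K) n, v m ω • c m) ∧
        (∀ a m : ℤ, n ≤ a → a ≤ i → i - K < m → m < n →
           ∀ q : Fin K, ((a - m : ℤ) ≤ ((q:ℕ):ℤ) ∨ (∀ k : ℤ, k ≠ 0 → r k = 0)) →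
             ((X a)ᴴ.mulVec (c m)) q
               = if ((q:ℕ):ℤ) = a - m then (∏ k ∈ Finset.Ico m n, (1 - (μ k : ℂ))) - 1
                 else 0) := by
    intro t
    induction t with
    | zero =>
      intro _ n hn
      refine ⟨w0, fun _ => 0, fun m _ => rfl, ?_, ?_⟩
      · intro ω
        have hn' : n = i - K := by omega
        rw [hn', hw0 ω]
        funext x
        simp
      · intro a m _ _ hm1 hm2 q _
        omega
    | succ t ih =>
      intro ht n hn
      set n0 : ℤ := i - K + t with hn0
      have hnn : n = n0 + 1 := by omega
      obtain ⟨d, c, hc0, hrep, hinv⟩ := ih (by omega) n0 rfl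
      have hrecn : ∀ ω, wt (n0 + 1) ω = wt n0 ω -
          (μ n0 : ℂ) • (X n0 * ((X n0)ᴴ * X n0)⁻¹).mulVec
            ((X n0)ᴴ.mulVec (wt n0 ω) + fun k : Fin K => v (n0 - (k : ℕ)) ω) :=
        hrec n0 (by omega) (by omega)
      set B : Matrix (Fin M) (Fin K) ℂ := X n0 * ((X n0)ᴴ * X n0)⁻¹ with hB
      set vc : ℤ → Fin K → ℂ := fun m k => if (m:ℤ) = n0 - (k:ℕ) then 1 else 0 with hvc
      set c' : ℤ → Fin M → ℂ :=
        fun m => c m - (μ n0 : ℂ) • B.mulVec ((X n0)ᴴ.mulVec (c m) + vc m) with hc'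
      set d' : Fin M → ℂ := d - (μ n0 : ℂ) • B.mulVec ((X n0)ᴴ.mulVec d) with hd'
      -- vanishing of out-of-window coefficients
      have hvc0 : ∀ m : ℤ, m < i - 2*K ∨ n0 + 1 ≤ m → vc m = 0 := by
        intro m hm
        funext k
        have : ¬ ((m:ℤ) = n0 - (k:ℕ)) := by
          have hk : (k:ℕ) < K := k.isLt
          omega
        simp [hvc, this]
      have hc0' : ∀ m : ℤ, m < i - 2*K ∨ n ≤ m → c' m = 0 := by
        intro m hm
        have h1 : c m = 0 := hc0 m (by omega)
        have h2 : vc m = 0 := hvc0 m (by omega)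
        simp [hc', h1, h2, Matrix.mulVec_zero]
      -- values of `(X a)ᴴ *ᵥ c m` for all `m ≤ n0` (extending the invariant to `m = n0`)
      have hha : ∀ a m : ℤ, n0 ≤ a → a ≤ i → i - K < m → m ≤ n0 →
          ∀ s : Fin K, ((a - m : ℤ) ≤ ((s:ℕ):ℤ) ∨ (∀ k : ℤ, k ≠ 0 → r k = 0)) →
            ((X a)ᴴ.mulVec (c m)) s
              = if ((s:ℕ):ℤ) = a - m then (∏ k ∈ Finset.Ico m n0, (1 - (μ k : ℂ))) - 1
                else 0 := by
        intro a m ha1 ha2 hm1 hm2 s hcond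
        rcases eq_or_lt_of_le hm2 with heq | hlt
        · rw [heq, hc0 n0 (Or.inr le_rfl), Matrix.mulVec_zero, Finset.Ico_self,
            Finset.prod_empty]
          simp
        · exact hinv a m ha1 ha2 hm1 hlt s hcond
      refine ⟨d', c', hc0', ?_, ?_⟩
      · -- the representation at time n = n0 + 1
        intro ω
        rw [hnn, hrecn ω, hrep ω]
        have hW : Finset.Ico (i - 2*K) (n0+1) = insert n0 (Finset.Ico (i - 2*K) n0) := by
          ext k
          simp only [Finset.mem_Ico, Finset.mem_insert]
          omega
        have hsum1 : ∑ m ∈ Finset.Ico (i - 2*K) (n0+1), v m ω • c m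
            = ∑ m ∈ Finset.Ico (i - 2*K) n0, v m ω • c m := by
          rw [hW, Finset.sum_insert (by simp [Finset.mem_Ico])]
          rw [hc0 n0 (Or.inr le_rfl), smul_zero, zero_add]
        have hvvec : (fun k : Fin K => v (n0 - (k : ℕ)) ω)
            = ∑ m ∈ Finset.Ico (i - 2*K) (n0+1), v m ω • vc m := by
          funext k
          rw [Finset.sum_apply]
          have : ∀ m : ℤ, v m ω • vc m k = if m = n0 - (k:ℕ) then v m ω else 0 := by
            intro m
            simp only [hvc, Pi.smul_apply, smul_eq_mul]
            split_ifs <;> simp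
          simp only [Pi.smul_apply, smul_eq_mul, hvc]
          rw [Finset.sum_congr rfl (fun m _ => by
            show v m ω * (if (m:ℤ) = n0 - (k:ℕ) then (1:ℂ) else 0)
              = if m = n0 - (k:ℕ) then v m ω else 0
            split_ifs <;> simp)]
          rw [Finset.sum_ite_eq' (Finset.Ico (i - 2*K) (n0+1)) (n0 - (k:ℕ)) (fun m => v m ω)]
          rw [if_pos]
          simp only [Finset.mem_Ico]
          have hk : (k:ℕ) < K := k.isLt
          omega
        -- expand the argument of B *ᵥ
        have harg : (X n0)ᴴ.mulVec (d + ∑ m ∈ Finset.Ico (i - 2*K) n0, v m ω • c m)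
              + (fun k : Fin K => v (n0 - (k : ℕ)) ω)
            = (X n0)ᴴ.mulVec d
              + ∑ m ∈ Finset.Ico (i - 2*K) (n0+1),
                  v m ω • ((X n0)ᴴ.mulVec (c m) + vc m) := by
          rw [Matrix.mulVec_add, hvvec]
          have hms : (X n0)ᴴ.mulVec (∑ m ∈ Finset.Ico (i - 2*K) n0, v m ω • c m)
              = ∑ m ∈ Finset.Ico (i - 2*K) n0, v m ω • (X n0)ᴴ.mulVec (c m) := by
            simp only [← Matrix.mulVecLin_apply, map_sum, LinearMap.map_smul]
          rw [hms]
          have hms2 : ∑ m ∈ Finset.Ico (i - 2*K) n0, v m ω • (X n0)ᴴ.mulVec (c m)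
              = ∑ m ∈ Finset.Ico (i - 2*K) (n0+1), v m ω • (X n0)ᴴ.mulVec (c m) := by
            rw [hW, Finset.sum_insert (by simp [Finset.mem_Ico])]
            rw [hc0 n0 (Or.inr le_rfl), Matrix.mulVec_zero, smul_zero, zero_add]
          rw [hms2, add_assoc]
          congr 1
          rw [← Finset.sum_add_distrib]
          exact Finset.sum_congr rfl (fun m _ => (smul_add (v m ω) _ _).symm)
        rw [harg]
        rw [Matrix.mulVec_add]
        have hBsum : B.mulVec (∑ m ∈ Finset.Ico (i - 2*K) (n0+1),
              v m ω • ((X n0)ᴴ.mulVec (c m) + vc m))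
            = ∑ m ∈ Finset.Ico (i - 2*K) (n0+1),
                v m ω • B.mulVec ((X n0)ᴴ.mulVec (c m) + vc m) := by
          simp only [← Matrix.mulVecLin_apply, map_sum, LinearMap.map_smul]
        rw [hBsum, hsum1.symm]
        rw [smul_add, Finset.smul_sum]
        have hterm : ∀ m : ℤ, (μ n0 : ℂ) • (v m ω • B.mulVec ((X n0)ᴴ.mulVec (c m) + vc m))
            = v m ω • ((μ n0 : ℂ) • B.mulVec ((X n0)ᴴ.mulVec (c m) + vc m)) :=
          fun m => smul_comm _ _ _
        rw [Finset.sum_congr rfl (fun m _ => hterm m)]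
        have hcs : ∑ m ∈ Finset.Ico (i - 2*K) (n0+1), v m ω • c' m
            = (∑ m ∈ Finset.Ico (i - 2*K) (n0+1), v m ω • c m)
              - ∑ m ∈ Finset.Ico (i - 2*K) (n0+1),
                  v m ω • ((μ n0 : ℂ) • B.mulVec ((X n0)ᴴ.mulVec (c m) + vc m)) := by
          rw [← Finset.sum_sub_distrib]
          exact Finset.sum_congr rfl (fun m _ => by rw [hc']; rw [smul_sub])
        rw [hd', hcs, hsum1]
        abel
      · -- the invariant at time n = n0 + 1
        intro a m ha1 ha2 hm1 hm2 q hcond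
        have hmn0 : m ≤ n0 := by omega
        have han0 : n0 + 1 ≤ a := by omega
        -- the step index j = a - n0 ≥ 1
        set j : ℕ := (a - n0).toNat with hj
        have hj1 : 1 ≤ j := by omega
        have hjK : j ≤ K - 1 := by omega
        have hjz : (j : ℤ) = a - n0 := by omega
        -- (X a)ᴴ * B = R (-j) * (R 0)⁻¹
        have hXan : (X a)ᴴ * X n0 = (M:ℂ) • R (-(j:ℤ)) := by
          have := hX a j hjK
          have harg2 : a - (j:ℤ) = n0 := by omega
          rwa [harg2] at this
        have hXnn : (X n0)ᴴ * X n0 = (M:ℂ) • R 0 := by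
          have := hX n0 0 (by omega)
          simpa using this
        have hM0 : (M:ℂ) ≠ 0 := Nat.cast_ne_zero.mpr (by omega)
        have hTB : (X a)ᴴ * B = R (-(j:ℤ)) * (R 0)⁻¹ := by
          rw [hB, ← Matrix.mul_assoc, hXan, hXnn, apa_invSmulMat hM _ hR0,
            Matrix.smul_mul, Matrix.mul_smul, smul_smul, mul_inv_cancel₀ hM0, one_smul]
        -- the value of the auxiliary vector h m
        set hv : Fin K → ℂ := (X n0)ᴴ.mulVec (c m) + vc m with hhv
        have hhval : ∀ s : Fin K, ((n0 - m : ℤ) ≤ ((s:ℕ):ℤ) ∨ (∀ k : ℤ, k ≠ 0 → r k = 0)) →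
            hv s = if ((s:ℕ):ℤ) = n0 - m then (∏ k ∈ Finset.Ico m n0, (1 - (μ k : ℂ)))
              else 0 := by
          intro s hs
          have h1 := hha n0 m le_rfl (by omega) hm1 hmn0 s hs
          have h2 : vc m s = if ((s:ℕ):ℤ) = n0 - m then 1 else 0 := by
            simp only [hvc]
            split_ifs with h3 h4 h4 <;> first | rfl | omega
          simp only [hhv, Pi.add_apply, h1, h2]
          split_ifs <;> ring
        -- the product update
        have hPstep : (∏ k ∈ Finset.Ico m (n0+1), (1 - (μ k : ℂ)))
            = (∏ k ∈ Finset.Ico m n0, (1 - (μ k : ℂ))) * (1 - (μ n0 : ℂ)) := by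
          have hW2 : Finset.Ico m (n0+1) = insert n0 (Finset.Ico m n0) := by
            ext k
            simp only [Finset.mem_Ico, Finset.mem_insert]
            omega
          rw [hW2, Finset.prod_insert (by simp [Finset.mem_Ico])]
          ring
        -- expand c' m
        have hc'e : ((X a)ᴴ).mulVec (c' m)
            = ((X a)ᴴ).mulVec (c m)
              - (μ n0 : ℂ) • ((R (-(j:ℤ)) * (R 0)⁻¹).mulVec hv) := by
          rw [hc']
          rw [Matrix.mulVec_sub, Matrix.mulVec_smul, Matrix.mulVec_mulVec, hTB]
        have hfirst := hha a m (by omega) ha2 hm1 hmn0 q hcond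
        rw [hnn]
        rcases le_or_gt (j:ℤ) ((q:ℕ):ℤ) with hqj | hqj
        · -- q ≥ j : use the row-shift property
          have hqj' : j ≤ (q:ℕ) := by omega
          have hshift := apa_rowShift r R hR hR0 j hv q hqj'
          set s : Fin K := ⟨(q:ℕ) - j, by omega⟩ with hs
          have hsval : ((s:ℕ):ℤ) = (q:ℕ) - (j:ℤ) := by
            simp only [hs]; omega
          have hscond : ((n0 - m : ℤ) ≤ ((s:ℕ):ℤ) ∨ (∀ k : ℤ, k ≠ 0 → r k = 0)) := by
            rcases hcond with h | h
            · left; omega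
            · right; exact h
          have hhs := hhval s hscond
          have : (((X a)ᴴ).mulVec (c' m)) q
              = (((X a)ᴴ).mulVec (c m)) q
                - (μ n0 : ℂ) * (((R (-(j:ℤ)) * (R 0)⁻¹).mulVec hv) q) := by
            rw [hc'e]
            simp [Pi.sub_apply, Pi.smul_apply, smul_eq_mul]
          rw [this, hfirst, hshift, hhs]
          have hiff : (((s:ℕ):ℤ) = n0 - m) ↔ (((q:ℕ):ℤ) = a - m) := by omega
          by_cases hcase : ((q:ℕ):ℤ) = a - m
          · rw [if_pos hcase, if_pos (hiff.mpr hcase), if_pos hcase, hPstep]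
            ring
          · rw [if_neg hcase, if_neg (fun hx => hcase (hiff.mp hx)), if_neg hcase]
            ring
        · -- q < j : only possible to conclude in the white case
          have hwhite : ∀ k : ℤ, k ≠ 0 → r k = 0 := by
            rcases hcond with h | h
            · exfalso; omega
            · exact h
          have hzero := apa_rowZeroWhite r R hR hwhite j hv q (by omega)
          have : (((X a)ᴴ).mulVec (c' m)) q
              = (((X a)ᴴ).mulVec (c m)) q
                - (μ n0 : ℂ) * (((R (-(j:ℤ)) * (R 0)⁻¹).mulVec hv) q) := by
            rw [hc'e]
            simp [Pi.sub_apply, Pi.smul_apply, smul_eq_mul]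
          rw [this, hfirst, hzero]
          have hne : ¬ (((q:ℕ):ℤ) = a - m) := by omega
          rw [if_neg hne, if_neg hne]
          ring
  -- apply the induction at t = K, n = i
  obtain ⟨d, c, hc0, hrep, hinv⟩ := key K le_rfl i (by omega)
  -- reduce each entry of Eav to the coefficient of v (i - p)
  have hEav : ∀ q p : Fin K,
      (∫ ω, ((X i)ᴴ.mulVec (wt i ω)) q * (starRingEnd ℂ) (v (i - (p:ℕ)) ω) ∂ℙ)
        = (σv2 : ℂ) * (if (i - (p:ℕ) : ℤ) ∈ Finset.Ico (i - 2*K) i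
            then ((X i)ᴴ.mulVec (c (i - (p:ℕ)))) q else 0) := by
    intro q p
    have hq : ∀ ω, ((X i)ᴴ.mulVec (wt i ω)) q
        = ((X i)ᴴ.mulVec d) q
          + ∑ m ∈ Finset.Ico (i - 2*K) i, v m ω * ((X i)ᴴ.mulVec (c m)) q := by
      intro ω
      rw [hrep ω]
      have : (X i)ᴴ.mulVec (d + ∑ m ∈ Finset.Ico (i - 2*K) i, v m ω • c m)
          = (X i)ᴴ.mulVec d
            + ∑ m ∈ Finset.Ico (i - 2*K) i, v m ω • (X i)ᴴ.mulVec (c m) := by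
        rw [Matrix.mulVec_add]
        congr 1
        simp only [← Matrix.mulVecLin_apply, map_sum, LinearMap.map_smul]
      rw [this]
      simp [Finset.sum_apply, Pi.smul_apply, smul_eq_mul]
    have := apa_covExpand ℙ σv2 v hL2 hmean hvar horth
      (((X i)ᴴ.mulVec d) q) (fun m => ((X i)ᴴ.mulVec (c m)) q)
      (Finset.Ico (i - 2*K) i) (i - (p:ℕ))
    rw [← this]
    congr 1
    funext ω
    rw [hq ω]
  refine ⟨?_, ?_, ?_, ?_⟩
  · -- strictly below the diagonal
    intro q p hpq
    beta_reduce
    rw [hEav q p]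
    by_cases hp0 : (p:ℕ) = 0
    · rw [if_neg]
      · ring
      · simp only [Finset.mem_Ico]
        omega
    · rw [if_pos (by simp only [Finset.mem_Ico]; have := p.isLt; omega)]
      rw [hinv i (i - (p:ℕ)) le_rfl le_rfl (by have := p.isLt; omega) (by omega) q
        (Or.inl (by omega))]
      rw [if_neg (by omega)]
      ring
  · -- the (1,1) entry
    beta_reduce
    rw [hEav]
    rw [if_neg]
    · ring
    · simp only [Finset.mem_Ico]
      omega
  · -- the diagonal entries
    intro q hq1
    beta_reduce
    rw [hEav q q]
    rw [if_pos (by simp only [Finset.mem_Ico]; have := q.isLt; omega)]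
    rw [hinv i (i - (q:ℕ)) le_rfl le_rfl (by have := q.isLt; omega) (by omega) q
      (Or.inl (by omega))]
    rw [if_pos (by omega)]
    have hreidx : (∏ k ∈ Finset.Ico (i - (q:ℕ)) i, (1 - (μ k : ℂ)))
        = ∏ k ∈ Finset.Icc 1 (q:ℕ), (1 - (μ (i - k) : ℂ)) := apa_prodReindex μ i (q:ℕ)
    have htele := apa_teleProd (fun k => (μ (i - k) : ℂ)) (q:ℕ) hq1
    rw [hreidx, htele]
    beta_reduce
    have h1 : (i - ((1:ℕ):ℤ)) = i - 1 := by norm_num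
    rw [h1]
    ring
  · -- white input: off-diagonal entries vanish
    intro hwhite q p hqp
    beta_reduce
    rw [hEav q p]
    by_cases hp0 : (p:ℕ) = 0
    · rw [if_neg]
      · ring
      · simp only [Finset.mem_Ico]
        omega
    · rw [if_pos (by simp only [Finset.mem_Ico]; have := p.isLt; omega)]
      rw [hinv i (i - (p:ℕ)) le_rfl le_rfl (by have := p.isLt; omega) (by omega) q
        (Or.inr hwhite)]
      rw [if_neg (by
        intro h
        exact hqp (Fin.ext (by omega)))]
      ring
end

section
/- Let K ≥ 2 be an integer and r : ℤ → ℂ, and for each m ∈ ℤ let R_m be the K×K Toeplitz matrix with (q,p) entry r(q − p + m) (1-based indices); assume R_0 is invertible. Then for every integer j with 1 ≤ j ≤ K−1, the matrix T_j := M_j R_0^{-1} I_{K,j}, where M_j := R_{−j} − I_{K,−j} R_0, belongs to F_j ∩ C_j (its last K−j rows and its first j columns are zero), and R_{−j} R_0^{-1} I_{K,j} = Id_{K,j} + T_j. -/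
/-- The `K × K` shift matrix `I_{K,m}`: its `(q,p)` entry (1-based) is 1 if
`p − q = m` and 0 otherwise. -/
def shiftI (K : ℕ) (m : ℤ) : Matrix (Fin K) (Fin K) ℂ :=
  fun q p => if (p : ℤ) - (q : ℤ) = m then 1 else 0

/-- The `K × K` diagonal matrix `Id_{K,m}` whose `(q,q)` entry (1-based) is 1 if
`q > m` and 0 otherwise (with 0-based `Fin K` indices: `m ≤ q`). -/
def diagId (K m : ℕ) : Matrix (Fin K) (Fin K) ℂ :=
  fun q p => if q = p ∧ m ≤ (q : ℕ) then 1 else 0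

/-- `F_m`: last `K − m` rows zero (`A_{q,p} = 0` for 1-based `m < q ≤ K`). -/
def inF (K m : ℕ) (A : Matrix (Fin K) (Fin K) ℂ) : Prop :=
  ∀ q p : Fin K, m ≤ (q : ℕ) → A q p = 0

/-- `C_m`: first `m` columns zero (`A_{q,p} = 0` for 1-based `1 ≤ p ≤ m`). -/
def inC (K m : ℕ) (A : Matrix (Fin K) (Fin K) ℂ) : Prop :=
  ∀ q p : Fin K, (p : ℕ) < m → A q p = 0

lemma shift_mul (K j : ℕ) (A : Matrix (Fin K) (Fin K) ℂ) (q p : Fin K) :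
    (shiftI K (-(j : ℤ)) * A) q p =
      if h : j ≤ (q : ℕ) then A ⟨(q : ℕ) - j, lt_of_le_of_lt (Nat.sub_le _ _) q.isLt⟩ p
      else 0 := by
  rw [Matrix.mul_apply]
  simp only [shiftI, ite_mul, one_mul, zero_mul]
  split
  · rename_i h
    rw [Finset.sum_eq_single (⟨(q : ℕ) - j, lt_of_le_of_lt (Nat.sub_le _ _) q.isLt⟩ : Fin K)]
    · rw [if_pos]
      simp only []
      push_cast [Nat.cast_sub h]
      ring
    · intro s _ hs
      rw [if_neg]
      intro hc
      apply hs
      apply Fin.ext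
      show (s : ℕ) = (q : ℕ) - j
      omega
    · intro hs; exact absurd (Finset.mem_univ _) hs
  · rename_i h
    apply Finset.sum_eq_zero
    intro s _
    rw [if_neg]
    intro hc
    have : ((s : ℕ) : ℤ) = (q : ℕ) - (j : ℕ) := by omega
    omega

lemma mul_shift (K j : ℕ) (A : Matrix (Fin K) (Fin K) ℂ) (q p : Fin K) :
    (A * shiftI K (j : ℤ)) q p =
      if h : j ≤ (p : ℕ) then A q ⟨(p : ℕ) - j, lt_of_le_of_lt (Nat.sub_le _ _) p.isLt⟩
      else 0 := by
  rw [Matrix.mul_apply]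
  simp only [shiftI, mul_ite, mul_one, mul_zero]
  split
  · rename_i h
    rw [Finset.sum_eq_single (⟨(p : ℕ) - j, lt_of_le_of_lt (Nat.sub_le _ _) p.isLt⟩ : Fin K)]
    · rw [if_pos]
      simp only []
      push_cast [Nat.cast_sub h]
      ring
    · intro s _ hs
      rw [if_neg]
      intro hc
      apply hs
      apply Fin.ext
      show (s : ℕ) = (p : ℕ) - j
      omega
    · intro hs; exact absurd (Finset.mem_univ _) hs
  · rename_i h
    apply Finset.sum_eq_zero
    intro s _
    rw [if_neg]
    intro hc
    have : ((s : ℕ) : ℤ) = (p : ℕ) - (j : ℕ) := by omega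
    omega

/-- Lemma 2 of the paper: for a Toeplitz family `R_m` (entry `(q,p)` equals
`r (q − p + m)`) with `R_0` invertible and `1 ≤ j ≤ K − 1`, the matrix
`T_j := M_j R_0⁻¹ I_{K,j}` with `M_j := R_{−j} − I_{K,−j} R_0` belongs to
`F_j ∩ C_j`, and `R_{−j} R_0⁻¹ I_{K,j} = Id_{K,j} + T_j`. -/
theorem first_term_decomp (K : ℕ) (hK : 2 ≤ K) (r : ℤ → ℂ)
    (R : ℤ → Matrix (Fin K) (Fin K) ℂ)
    (hR : ∀ m : ℤ, ∀ q p : Fin K, R m q p = r ((q : ℤ) - (p : ℤ) + m))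
    (hR0 : IsUnit (R 0)) (j : ℕ) (hj1 : 1 ≤ j) (hj2 : j ≤ K - 1) :
    inF K j ((R (-(j : ℤ)) - shiftI K (-(j : ℤ)) * R 0) * (R 0)⁻¹ * shiftI K (j : ℤ)) ∧
    inC K j ((R (-(j : ℤ)) - shiftI K (-(j : ℤ)) * R 0) * (R 0)⁻¹ * shiftI K (j : ℤ)) ∧
    R (-(j : ℤ)) * (R 0)⁻¹ * shiftI K (j : ℤ) =
      diagId K j + (R (-(j : ℤ)) - shiftI K (-(j : ℤ)) * R 0) * (R 0)⁻¹ * shiftI K (j : ℤ) := by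
  have hdet : IsUnit (R 0).det := (Matrix.isUnit_iff_isUnit_det _).mp hR0
  have hinv : R 0 * (R 0)⁻¹ = 1 := Matrix.mul_nonsing_inv _ hdet
  set M := R (-(j : ℤ)) - shiftI K (-(j : ℤ)) * R 0 with hM
  have hMrow : ∀ q p : Fin K, j ≤ (q : ℕ) → M q p = 0 := by
    intro q p hq
    rw [hM, Matrix.sub_apply, shift_mul, dif_pos hq, hR, hR]
    simp only []
    push_cast [Nat.cast_sub hq]
    ring_nf
  have hProdRow : ∀ (B : Matrix (Fin K) (Fin K) ℂ) (q p : Fin K), j ≤ (q : ℕ) →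
      (M * B) q p = 0 := by
    intro B q p hq
    rw [Matrix.mul_apply]
    apply Finset.sum_eq_zero
    intro s _
    rw [hMrow q s hq, zero_mul]
  refine ⟨?_, ?_, ?_⟩
  · intro q p hq
    rw [mul_shift]
    split
    · exact hProdRow _ _ _ hq
    · rfl
  · intro q p hp
    rw [mul_shift, dif_neg (by omega)]
  · have key : shiftI K (-(j : ℤ)) * R 0 * (R 0)⁻¹ * shiftI K (j : ℤ) = diagId K j := by
      rw [mul_assoc (shiftI K (-(j : ℤ))), hinv, mul_one]
      ext q p
      rw [mul_shift]
      simp only [shiftI, diagId]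
      split
      · rename_i h
        split <;> rename_i h2 <;> rw [eq_comm]
        · rw [if_pos]
          constructor
          · apply Fin.ext
            have : ((q : ℕ) : ℤ) - ((p : ℕ) - (j : ℕ) : ℤ) = j := by
              push_cast [Nat.cast_sub h] at h2 ⊢; omega
            omega
          · have : ((q : ℕ) : ℤ) - ((p : ℕ) - (j : ℕ) : ℤ) = j := by
              push_cast [Nat.cast_sub h] at h2 ⊢; omega
            omega
        · rw [if_neg]
          rintro ⟨rfl, hq⟩
          apply h2
          push_cast [Nat.cast_sub h]
          omega
      · rename_i h
        rw [eq_comm, if_neg]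
        rintro ⟨rfl, hq⟩
        omega
    have hRM : R (-(j : ℤ)) = M + shiftI K (-(j : ℤ)) * R 0 := by rw [hM]; abel
    rw [hRM, add_mul, add_mul, key, add_comm]
end

section
/- Let K ≥ 3 be an integer and r : ℤ → ℂ, and for each m ∈ ℤ let R_m be the K×K Toeplitz matrix with (q,p) entry r(q − p + m) (1-based indices); assume R_0 is invertible. Let j be an integer with 2 ≤ j ≤ K−1, let i ∈ ℤ, let c ≥ 1, and let σ_1 > σ_2 > … > σ_c be strictly decreasing integers with i > σ_1 and σ_c > i − j. Then the matrix P := R_{σ_1 − i} R_0^{-1} · (Π_{n=1}^{c−1} R_{σ_{n+1} − σ_n} R_0^{-1}) · R_{(i−j) − σ_c} R_0^{-1} · I_{K,j} (with the product factors ordered by increasing n from left to right) satisfies P = Id_{K,j} + T for some matrix T ∈ F_j ∩ C_j (its last K−j rows and its first j columns are zero). Moreover, if r(k) = 0 for all k ≠ 0 (white process), then T = 0, i.e., P = Id_{K,j}. -/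
/-- `ℤ`-indexed version of `inF`. -/
def inFZ (K : ℕ) (m : ℤ) (A : Matrix (Fin K) (Fin K) ℂ) : Prop :=
  ∀ q p : Fin K, m ≤ (q : ℤ) → A q p = 0

lemma inFZ_mono {K : ℕ} {m m' : ℤ} (h : m ≤ m') {A : Matrix (Fin K) (Fin K) ℂ}
    (hA : inFZ K m A) : inFZ K m' A :=
  fun q p hq => hA q p (h.trans hq)

lemma inFZ_mul_right {K : ℕ} {m : ℤ} {A : Matrix (Fin K) (Fin K) ℂ}
    (hA : inFZ K m A) (B : Matrix (Fin K) (Fin K) ℂ) : inFZ K m (A * B) := by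
  intro q p hq
  simp only [Matrix.mul_apply]
  exact Finset.sum_eq_zero fun t _ => by rw [hA q t hq, zero_mul]

lemma inFZ_add {K : ℕ} {m : ℤ} {A B : Matrix (Fin K) (Fin K) ℂ}
    (hA : inFZ K m A) (hB : inFZ K m B) : inFZ K m (A + B) := by
  intro q p hq
  simp [Matrix.add_apply, hA q p hq, hB q p hq]

lemma inFZ_shift_mul {K : ℕ} {a m : ℤ} {A : Matrix (Fin K) (Fin K) ℂ} (hA : inFZ K m A) :
    inFZ K (m - a) (shiftI K a * A) := by
  intro q p hq
  simp only [Matrix.mul_apply, shiftI]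
  refine Finset.sum_eq_zero fun t _ => ?_
  by_cases h : (t : ℤ) - q = a
  · rw [hA t p (by omega), mul_zero]
  · simp [h]

lemma shiftI_zero (K : ℕ) : shiftI K 0 = 1 := by
  ext q p
  simp only [shiftI, Matrix.one_apply]
  by_cases h : q = p
  · simp [h]
  · have : ¬((p : ℤ) - q = 0) := by
      intro hc; exact h (Fin.ext (by omega))
    simp [h, this]

lemma shiftI_mul_shiftI {K : ℕ} {a b : ℤ} (ha : a ≤ 0) (hb : b ≤ 0) :
    shiftI K a * shiftI K b = shiftI K (a + b) := by
  ext q p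
  simp only [Matrix.mul_apply, shiftI]
  by_cases h : (p : ℤ) - q = a + b
  · rw [if_pos h]
    have hqK : (q : ℤ) < K := by exact_mod_cast q.isLt
    have h0 : (0 : ℤ) ≤ (q : ℤ) + a := by
      have : (0 : ℤ) ≤ (p : ℤ) := by positivity
      omega
    have hK : (q : ℤ) + a < K := by omega
    set t : Fin K := ⟨((q : ℤ) + a).toNat, by omega⟩ with ht
    have htv : (t : ℤ) = (q : ℤ) + a := by simp [ht]; omega
    rw [Finset.sum_eq_single t]
    · have h1 : (t : ℤ) - q = a := by omega
      have h2 : (p : ℤ) - t = b := by omega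
      rw [if_pos h1, if_pos h2, one_mul]
    · intro u _ hu
      by_cases h1 : (u : ℤ) - q = a
      · exact absurd (Fin.ext (by omega)) hu
      · rw [if_neg h1, zero_mul]
    · intro hn; exact absurd (Finset.mem_univ t) hn
  · rw [if_neg h]
    refine Finset.sum_eq_zero fun t _ => ?_
    by_cases h1 : (t : ℤ) - q = a
    · have h2 : ¬((p : ℤ) - t = b) := by omega
      rw [if_neg h2, mul_zero]
    · rw [if_neg h1, zero_mul]

lemma shiftI_neg_mul_shiftI {K : ℕ} (j : ℕ) :
    shiftI K (-(j : ℤ)) * shiftI K (j : ℤ) = diagId K j := by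
  ext q p
  simp only [Matrix.mul_apply, shiftI, diagId]
  by_cases h : q = p ∧ j ≤ (q : ℕ)
  · rw [if_pos h]
    obtain ⟨rfl, hj⟩ := h
    set t : Fin K := ⟨(q : ℕ) - j, by omega⟩ with ht
    have htv : (t : ℤ) = (q : ℤ) - j := by simp [ht]; omega
    rw [Finset.sum_eq_single t]
    · have h1 : (t : ℤ) - q = -(j : ℤ) := by omega
      have h2 : (q : ℤ) - t = (j : ℤ) := by omega
      rw [if_pos h1, if_pos h2, one_mul]
    · intro u _ hu
      by_cases h1 : (u : ℤ) - q = -(j : ℤ)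
      · exact absurd (Fin.ext (by omega)) hu
      · rw [if_neg h1, zero_mul]
    · intro hn; exact absurd (Finset.mem_univ t) hn
  · rw [if_neg h]
    refine Finset.sum_eq_zero fun t _ => ?_
    by_cases h1 : (t : ℤ) - q = -(j : ℤ)
    · by_cases h2 : (p : ℤ) - t = (j : ℤ)
      · exfalso
        apply h
        have ht0 : (0 : ℤ) ≤ (t : ℤ) := by positivity
        exact ⟨Fin.ext (by omega), by omega⟩
      · rw [if_neg h2, mul_zero]
    · rw [if_neg h1, zero_mul]

lemma inC_mul_shift {K : ℕ} (j : ℕ) (A : Matrix (Fin K) (Fin K) ℂ) :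
    inC K j (A * shiftI K (j : ℤ)) := by
  intro q p hp
  simp only [Matrix.mul_apply, shiftI]
  refine Finset.sum_eq_zero fun t _ => ?_
  have ht0 : (0 : ℤ) ≤ (t : ℤ) := by positivity
  have : ¬((p : ℤ) - t = (j : ℤ)) := by omega
  rw [if_neg this, mul_zero]

lemma key_decomp {K : ℕ} {r : ℤ → ℂ} {R : ℤ → Matrix (Fin K) (Fin K) ℂ}
    (hR : ∀ m : ℤ, ∀ q p : Fin K, R m q p = r ((q : ℤ) - (p : ℤ) + m))
    (hR0 : IsUnit (R 0)) {m : ℤ} (hm : m ≤ 0) :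
    ∃ E : Matrix (Fin K) (Fin K) ℂ, inFZ K (-m) E ∧
      R m * (R 0)⁻¹ = shiftI K m + E ∧
      ((∀ k : ℤ, k ≠ 0 → r k = 0) → E = 0) := by
  have hinv : R 0 * (R 0)⁻¹ = 1 :=
    Matrix.mul_nonsing_inv _ ((Matrix.isUnit_iff_isUnit_det _).mp hR0)
  refine ⟨(R m - shiftI K m * R 0) * (R 0)⁻¹, ?_, ?_, ?_⟩
  · refine inFZ_mul_right (fun q p hq => ?_) _
    simp only [Matrix.sub_apply, Matrix.mul_apply, shiftI, hR]
    have hqK : (q : ℤ) < K := by exact_mod_cast q.isLt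
    set t : Fin K := ⟨((q : ℤ) + m).toNat, by omega⟩ with ht
    have htv : (t : ℤ) = (q : ℤ) + m := by simp [ht]; omega
    rw [Finset.sum_eq_single t]
    · have h1 : (t : ℤ) - q = m := by omega
      have h2 : (t : ℤ) - p + 0 = (q : ℤ) - p + m := by omega
      rw [if_pos h1, one_mul, h2, sub_self]
    · intro u _ hu
      by_cases h1 : (u : ℤ) - q = m
      · exact absurd (Fin.ext (by omega)) hu
      · rw [if_neg h1, zero_mul]
    · intro hn; exact absurd (Finset.mem_univ t) hn
  · rw [sub_mul, Matrix.mul_assoc, hinv, Matrix.mul_one]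
    abel
  · intro hw
    have hz : R m - shiftI K m * R 0 = 0 := by
      ext q p
      simp only [Matrix.sub_apply, Matrix.mul_apply, shiftI, hR, Matrix.zero_apply]
      by_cases h : (p : ℤ) - q = m
      · rw [Finset.sum_eq_single p]
        · have h2 : (q : ℤ) - p + m = (p : ℤ) - p + 0 := by omega
          rw [if_pos h, one_mul, h2, sub_self]
        · intro u _ hu
          by_cases h1 : (u : ℤ) - q = m
          · exact absurd (Fin.ext (by omega)) hu
          · rw [if_neg h1, zero_mul]
        · intro hn; exact absurd (Finset.mem_univ p) hn
      · have h1 : r ((q : ℤ) - p + m) = 0 := hw _ (by omega)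
        rw [h1, Finset.sum_eq_zero, sub_zero]
        intro t _
        by_cases h1 : (t : ℤ) - q = m
        · have : r ((t : ℤ) - p + 0) = 0 := hw _ (by omega)
          rw [this, mul_zero]
        · rw [if_neg h1, zero_mul]
    rw [hz, Matrix.zero_mul]

lemma list_sum_nonpos : ∀ L : List ℤ, (∀ x ∈ L, x ≤ 0) → L.sum ≤ 0
  | [], _ => by simp
  | m :: L, h => by
    have h1 := h m List.mem_cons_self
    have h2 := list_sum_nonpos L (fun x hx => h x (List.mem_cons_of_mem m hx))
    simp only [List.sum_cons]
    omega

lemma prod_decomp {K : ℕ} {r : ℤ → ℂ} {R : ℤ → Matrix (Fin K) (Fin K) ℂ}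
    (hR : ∀ m : ℤ, ∀ q p : Fin K, R m q p = r ((q : ℤ) - (p : ℤ) + m))
    (hR0 : IsUnit (R 0)) :
    ∀ L : List ℤ, (∀ m ∈ L, m ≤ 0) →
    ∃ E : Matrix (Fin K) (Fin K) ℂ, inFZ K (-L.sum) E ∧
      (L.map (fun m => R m * (R 0)⁻¹)).prod = shiftI K L.sum + E ∧
      ((∀ k : ℤ, k ≠ 0 → r k = 0) → E = 0)
  | [], _ => ⟨0, fun q p _ => rfl, by simp [shiftI_zero], fun _ => rfl⟩
  | m :: L, h => by
    have hm : m ≤ 0 := h m List.mem_cons_self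
    have hLle : ∀ x ∈ L, x ≤ 0 := fun x hx => h x (List.mem_cons_of_mem m hx)
    have hs : L.sum ≤ 0 := list_sum_nonpos L hLle
    obtain ⟨E2, hE2, hprod, hw2⟩ := prod_decomp hR hR0 L hLle
    obtain ⟨E1, hE1, hone, hw1⟩ := key_decomp hR hR0 hm
    refine ⟨shiftI K m * E2 + E1 * (shiftI K L.sum + E2), ?_, ?_, ?_⟩
    · refine inFZ_add ?_ ?_
      · exact inFZ_mono (le_of_eq (by rw [List.sum_cons]; ring)) (inFZ_shift_mul hE2)
      · exact inFZ_mono (by simp only [List.sum_cons]; omega)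
          (inFZ_mul_right hE1 _)
    · simp only [List.map_cons, List.prod_cons, List.sum_cons]
      rw [hone, hprod, add_mul, mul_add, shiftI_mul_shiftI hm hs]
      abel
    · intro hw
      rw [hw1 hw, hw2 hw]
      simp

lemma telescope (σ : ℕ → ℤ) :
    ∀ k : ℕ, ((List.range k).map (fun n => σ (n + 2) - σ (n + 1))).sum = σ (k + 1) - σ 1
  | 0 => by simp
  | k + 1 => by
    rw [List.range_succ, List.map_append, List.sum_append, telescope σ k]
    simp only [List.map_cons, List.map_nil, List.sum_cons, List.sum_nil]
    ring

/-- Lemma 3 of the paper: for a Toeplitz family `R_m` (entry `(q,p)` equals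
`r (q − p + m)`) with `R_0` invertible, an integer `2 ≤ j ≤ K − 1`, `i : ℤ`,
`c ≥ 1`, and strictly decreasing indices `σ_1 > … > σ_c` with `i > σ_1` and
`σ_c > i − j`, the matrix
`P = R_{σ₁−i} R₀⁻¹ (Π_{n=1}^{c−1} R_{σ_{n+1}−σ_n} R₀⁻¹) R_{(i−j)−σ_c} R₀⁻¹ I_{K,j}`
(ordered product, increasing `n` from left to right) satisfies
`P = Id_{K,j} + T` for some `T ∈ F_j ∩ C_j`; moreover `T = 0` if `r k = 0` for
all `k ≠ 0` (white process). -/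
theorem middle_term_decomp (K : ℕ) (hK : 3 ≤ K) (r : ℤ → ℂ)
    (R : ℤ → Matrix (Fin K) (Fin K) ℂ)
    (hR : ∀ m : ℤ, ∀ q p : Fin K, R m q p = r ((q : ℤ) - (p : ℤ) + m))
    (hR0 : IsUnit (R 0)) (j : ℕ) (hj1 : 2 ≤ j) (hj2 : j ≤ K - 1)
    (i : ℤ) (c : ℕ) (hc : 1 ≤ c) (σ : ℕ → ℤ)
    (hdec : ∀ n : ℕ, 1 ≤ n → n < c → σ (n + 1) < σ n)
    (hσ1 : σ 1 < i) (hσc : i - j < σ c) :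
    ∃ T : Matrix (Fin K) (Fin K) ℂ,
      inF K j T ∧ inC K j T ∧
      (R (σ 1 - i) * (R 0)⁻¹ *
        ((List.range (c - 1)).map (fun n => R (σ (n + 2) - σ (n + 1)) * (R 0)⁻¹)).prod *
        (R ((i - j) - σ c) * (R 0)⁻¹) * shiftI K (j : ℤ) = diagId K j + T) ∧
      ((∀ k : ℤ, k ≠ 0 → r k = 0) → T = 0) := by
  set L : List ℤ :=
    (σ 1 - i) :: ((List.range (c - 1)).map (fun n => σ (n + 2) - σ (n + 1)) ++ [(i - j) - σ c])
    with hLdef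
  have hL : ∀ m ∈ L, m ≤ 0 := by
    intro m hm
    simp only [hLdef, List.mem_cons, List.mem_append, List.mem_map, List.mem_range,
      List.mem_singleton] at hm
    rcases hm with h | ⟨n, hn, rfl⟩ | h
    · omega
    · have h2 : σ (n + 2) < σ (n + 1) := hdec (n + 1) (by omega) (by omega)
      omega
    · rcases h with rfl | h
      · omega
      · simp at h
  have hcc : c - 1 + 1 = c := by omega
  have hsum : L.sum = -(j : ℤ) := by
    simp only [hLdef, List.sum_cons, List.sum_append, telescope σ (c - 1), hcc,
      List.sum_cons, List.sum_nil]
    ring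
  obtain ⟨E, hE, hprod, hw⟩ := prod_decomp hR hR0 L hL
  rw [hsum] at hE hprod
  have hEF : inFZ K (j : ℤ) E := by rwa [neg_neg] at hE
  -- rewrite the goal product as (L.map f).prod
  have hmap : (L.map (fun m => R m * (R 0)⁻¹)).prod =
      R (σ 1 - i) * (R 0)⁻¹ *
        ((List.range (c - 1)).map (fun n => R (σ (n + 2) - σ (n + 1)) * (R 0)⁻¹)).prod *
        (R ((i - j) - σ c) * (R 0)⁻¹) := by
    simp only [hLdef, List.map_cons, List.map_append, List.prod_cons, List.prod_append,
      List.map_map, List.map_cons, List.map_nil, List.prod_cons, List.prod_nil,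
      Function.comp_def, mul_one]
    simp only [mul_assoc]
  refine ⟨E * shiftI K (j : ℤ), ?_, ?_, ?_, ?_⟩
  · intro q p hq
    exact inFZ_mul_right hEF _ q p (by exact_mod_cast hq)
  · exact inC_mul_shift j E
  · rw [← hmap, hprod, add_mul, shiftI_neg_mul_shiftI]
  · intro hwhite
    rw [hw hwhite, Matrix.zero_mul]
end

section
/- Let μ be a real number with 0 < μ < 2, let σ_v² be real, and let K ≥ 1 be an integer. If real numbers A, B, E satisfy μ·A = 2B + D and A = B + K·σ_v² + D with D = −2σ_v²·(K − (1 − (1−μ)^K)/μ), and additionally B = K·E (equal energy of the components of the a priori error vector), then E = σ_v²·(1 − 2(1−μ)(1 − (1−μ)^K)/(K·μ·(2−μ))). -/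
/-- Closed-form steady-state EMSE of APA: if `μ A = 2B + D` and
`A = B + K σ_v² + D` with `D = −2σ_v² (K − (1 − (1−μ)^K)/μ)`, `0 < μ < 2`,
and additionally `B = K E` (equal energy of the components of the a priori
error vector), then `E = σ_v² (1 − 2(1−μ)(1 − (1−μ)^K)/(K μ (2−μ)))`. -/
theorem steady_state_emse (μ σv2 : ℝ) (hμ0 : 0 < μ) (hμ2 : μ < 2)
    (K : ℕ) (hK : 1 ≤ K) (A B E : ℝ)
    (h1 : μ * A = 2 * B + (-2 * σv2 * ((K : ℝ) - (1 - (1 - μ) ^ K) / μ)))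
    (h2 : A = B + (K : ℝ) * σv2 + (-2 * σv2 * ((K : ℝ) - (1 - (1 - μ) ^ K) / μ)))
    (h3 : B = (K : ℝ) * E) :
    E = σv2 * (1 - 2 * (1 - μ) * (1 - (1 - μ) ^ K) / ((K : ℝ) * μ * (2 - μ))) := by
  have hKpos : (0:ℝ) < (K:ℝ) := by exact_mod_cast hK
  have hμ : μ ≠ 0 := hμ0.ne'
  have h2μ : (2:ℝ) - μ ≠ 0 := by linarith
  have hKne : (K:ℝ) ≠ 0 := hKpos.ne'
  subst h3
  field_simp at h1 h2 ⊢
  nlinarith [h1, h2, sq_nonneg μ]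
end
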